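/- arXiv:2011.14822 — 3 statements merged into one kernel-verified Lean document; each statement's English description precedes it below -/
import Mathlib

section
/- Under strict ABC scores, if two subsets S and S' of customers satisfy that S contains strictly more A customers than S', then the total score of S exceeds the total score of S', regardless of how many B and C customers each contains (within the given classes). -/
/-!
An A customer outscores all B and C customers together: `p^A = p^B·|N_BC| + |N_CC| + 1`.
Splitting a subset into its A customers and the rest, the total score of `S'` is therefore
below `p^A·(|S' ∩ N_AC| + 1) ≤ p^A·|S ∩ N_AC|`, which is at most the score of `S`.
-/

open Finset

section

variable {ι : Type*} [DecidableEq ι]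

theorem Finset.sum_le_mul_card_add_mul_card {f : ι → ℕ} {T B C : Finset ι} {b c : ℕ}
    (hT : T ⊆ B ∪ C) (hB : ∀ i ∈ T ∩ B, f i = b) (hC : ∀ i ∈ T \ B, f i = c) :
    ∑ i ∈ T, f i ≤ b * #B + c * #C := by
  have hTC : T \ B ⊆ C := fun i hi =>
    (mem_union.1 (hT (mem_sdiff.1 hi).1)).resolve_left (mem_sdiff.1 hi).2
  rw [← sum_inter_add_sum_sdiff T B f, sum_const_nat hB, sum_const_nat hC, mul_comm b, mul_comm c]
  gcongr
  exact inter_subset_right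

theorem Finset.sum_lt_sum_of_card_inter_lt {f : ι → ℕ} {A S T : Finset ι} {p : ℕ}
    (hA : ∀ i ∈ A, f i = p) (hrest : ∑ i ∈ T \ A, f i < p) (h : #(T ∩ A) < #(S ∩ A)) :
    ∑ i ∈ T, f i < ∑ i ∈ S, f i := by
  have hAp : ∀ U : Finset ι, ∀ i ∈ U ∩ A, f i = p := fun U i hi => hA i (mem_inter.1 hi).2
  calc ∑ i ∈ T, f i = #(T ∩ A) * p + ∑ i ∈ T \ A, f i := by
        rw [← sum_inter_add_sum_sdiff T A f, sum_const_nat (hAp T)]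
    _ < (#(T ∩ A) + 1) * p := by rw [add_one_mul]; omega
    _ ≤ #(S ∩ A) * p := Nat.mul_le_mul_right p h
    _ = ∑ i ∈ S ∩ A, f i := (sum_const_nat (hAp S)).symm
    _ ≤ ∑ i ∈ S, f i := sum_le_sum_of_subset inter_subset_left

end

theorem strict_abc_more_A_higher_score_general {ι : Type*} [DecidableEq ι]
    (NC NAC NBC NCC : Finset ι)
    (hpart : NAC ∪ NBC ∪ NCC = NC)
    (pC pB pA : ℕ)
    (hpC : pC = 1)
    (hpA : pA = NCC.card + pB * NBC.card + 1)
    (score : ι → ℕ)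
    (hscore : ∀ i, score i = if i ∈ NAC then pA else if i ∈ NBC then pB else pC)
    (S S' : Finset ι) (hS' : S' ⊆ NC)
    (h : (S' ∩ NAC).card < (S ∩ NAC).card) :
    ∑ i ∈ S', score i < ∑ i ∈ S, score i := by
  have hA : ∀ i ∈ NAC, score i = pA := fun i hi => by simp [hscore, hi]
  have hsub : S' \ NAC ⊆ NBC ∪ NCC := fun i hi => by
    obtain ⟨hiS', hiA⟩ := mem_sdiff.1 hi
    have := hS' hiS'
    rw [← hpart, union_assoc, mem_union] at this
    exact this.resolve_left hiA
  have hB : ∀ i ∈ (S' \ NAC) ∩ NBC, score i = pB := fun i hi => by simp_all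
  have hC : ∀ i ∈ (S' \ NAC) \ NBC, score i = pC := fun i hi => by simp_all
  have hrest : ∑ i ∈ S' \ NAC, score i < pA := by
    have := sum_le_mul_card_add_mul_card hsub hB hC
    rw [hpC] at this
    omega
  exact sum_lt_sum_of_card_inter_lt hA hrest h

/-- Under strict ABC scores, a subset containing strictly more A customers has
a strictly larger total score, regardless of the B and C customers contained. -/
theorem strict_abc_more_A_higher_score {ι : Type*} [DecidableEq ι]
    (NC NAC NBC NCC : Finset ι)
    (hpart : NAC ∪ NBC ∪ NCC = NC)
    (hAB : Disjoint NAC NBC) (hAC : Disjoint NAC NCC) (hBC : Disjoint NBC NCC)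
    (pC pB pA : ℕ)
    (hpC : pC = 1)
    (hpB : pB = NCC.card + 1)
    (hpA : pA = NCC.card + pB * NBC.card + 1)
    (score : ι → ℕ)
    (hscore : ∀ i, score i = if i ∈ NAC then pA else if i ∈ NBC then pB else pC)
    (S S' : Finset ι) (hS : S ⊆ NC) (hS' : S' ⊆ NC)
    (h : (S' ∩ NAC).card < (S ∩ NAC).card) :
    ∑ i ∈ S', score i < ∑ i ∈ S, score i :=
  strict_abc_more_A_higher_score_general NC NAC NBC NCC hpart pC pB pA hpC hpA score hscore S S' hS'
    h
end

section
/- Under strict ABC scores, if subsets S and S' contain the same number of A customers but S contains strictly more B customers, then the total score of S exceeds the total score of S'. -/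
/-!
A B customer scores more than all C customers together, so once the A customers are matched,
one extra B customer outweighs whatever C customers `S'` may hold: in base `p^B` the B count is
the leading digit and the C count a digit below it.
-/

open Finset

theorem sum_ite_mem_ite_mem {ι M : Type*} [DecidableEq ι] [AddCommMonoid M]
    (A B S : Finset ι) (a b c : M) :
    ∑ i ∈ S, (if i ∈ A then a else if i ∈ B then b else c)
      = #(S ∩ A) • a + #(S \ A ∩ B) • b + #(S \ (A ∪ B)) • c := by
  simp only [sum_ite, sum_const, filter_mem_eq_inter, filter_notMem_eq_sdiff, sdiff_sdiff_left,
    sup_eq_union, add_assoc]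

theorem mul_add_lt_mul_of_lt_of_lt {p r b b' : ℕ} (hr : r < p) (hb : b' < b) :
    p * b' + r < p * b :=
  calc p * b' + r < p * (b' + 1) := by rw [mul_add_one]; omega
    _ ≤ p * b := Nat.mul_le_mul_left p hb

theorem strict_abc_more_B_higher_score_general {ι : Type*} [DecidableEq ι]
    (NC NAC NBC NCC : Finset ι)
    (hpart : NAC ∪ NBC ∪ NCC = NC)
    (hAB : Disjoint NAC NBC)
    (pC pB pA : ℕ)
    (hpC : pC = 1)
    (hpB : pB = NCC.card + 1)
    (score : ι → ℕ)
    (hscore : ∀ i, score i = if i ∈ NAC then pA else if i ∈ NBC then pB else pC)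
    (S S' : Finset ι) (hS' : S' ⊆ NC)
    (hA : (S ∩ NAC).card = (S' ∩ NAC).card)
    (hB : (S' ∩ NBC).card < (S ∩ NBC).card) :
    ∑ i ∈ S', score i < ∑ i ∈ S, score i := by
  have hsum (T : Finset ι) :
      ∑ i ∈ T, score i = #(T ∩ NAC) * pA + #(T ∩ NBC) * pB + #(T \ (NAC ∪ NBC)) := by
    have hB_outside_A : T \ NAC ∩ NBC = T ∩ NBC := by
      rw [sdiff_inter_right_comm, (hAB.symm.mono_left inter_subset_right).sdiff_eq_left]
    simp only [hscore, sum_ite_mem_ite_mem, smul_eq_mul, hpC, mul_one, hB_outside_A]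
  have hC : #(S' \ (NAC ∪ NBC)) < pB := by
    rw [hpB, Nat.lt_add_one_iff]
    exact card_le_card (sdiff_le_iff.mpr (hS'.trans hpart.ge))
  have hBC_lt : pB * #(S' ∩ NBC) + #(S' \ (NAC ∪ NBC)) < pB * #(S ∩ NBC) :=
    mul_add_lt_mul_of_lt_of_lt hC hB
  rw [hsum, hsum, hA]
  linarith

/-- Under strict ABC scores, if two subsets contain the same number of A
customers but the first contains strictly more B customers, then the first has
a strictly larger total score. -/
theorem strict_abc_more_B_higher_score {ι : Type*} [DecidableEq ι]
    (NC NAC NBC NCC : Finset ι)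
    (hpart : NAC ∪ NBC ∪ NCC = NC)
    (hAB : Disjoint NAC NBC) (hAC : Disjoint NAC NCC) (hBC : Disjoint NBC NCC)
    (pC pB pA : ℕ)
    (hpC : pC = 1)
    (hpB : pB = NCC.card + 1)
    (hpA : pA = NCC.card + pB * NBC.card + 1)
    (score : ι → ℕ)
    (hscore : ∀ i, score i = if i ∈ NAC then pA else if i ∈ NBC then pB else pC)
    (S S' : Finset ι) (hS : S ⊆ NC) (hS' : S' ⊆ NC)
    (hA : (S ∩ NAC).card = (S' ∩ NAC).card)
    (hB : (S' ∩ NBC).card < (S ∩ NBC).card) :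
    ∑ i ∈ S', score i < ∑ i ∈ S, score i :=
  strict_abc_more_B_higher_score_general NC NAC NBC NCC hpart hAB pC pB pA hpC hpB score hscore S S'
    hS' hA hB
end

section
/- The strict ABC scoring induces a lexicographic order: for subsets S, S' of customers, total score of S is greater than total score of S' if and only if the triple (|S ∩ N_AC|, |S ∩ N_BC|, |S ∩ N_CC|) is lexicographically greater than the corresponding triple for S'. -/
/-! The total score of `T` is `a * pA + (b * pB + c)` for its class counts `(a, b, c)`, and the
scores are chosen so that `c < pB` and `b * pB + c < pA`: the total is a mixed-radix numeral with
digits `(a, b, c)`, and numerals compare lexicographically in their digits. -/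

open Finset

theorem mul_add_lt_mul_add_iff_lex {r a a' x x' : ℕ} (hx : x < r) (hx' : x' < r) :
    a' * r + x' < a * r + x ↔ a' < a ∨ a = a' ∧ x' < x := by
  constructor
  · intro h
    rcases lt_trichotomy a' a with ha | rfl | ha
    · exact Or.inl ha
    · exact Or.inr ⟨rfl, by omega⟩
    · have : (a + 1) * r ≤ a' * r := Nat.mul_le_mul_right r ha
      rw [add_one_mul] at this
      omega
  · rintro (ha | ⟨rfl, hx⟩)
    · calc a' * r + x' < (a' + 1) * r := by rw [add_one_mul]; omega
        _ ≤ a * r := Nat.mul_le_mul_right r ha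
        _ ≤ a * r + x := Nat.le_add_right _ _
    · omega

section ThreeClasses

variable {ι M : Type*} [DecidableEq ι] [AddCommMonoid M] {A B C : Finset ι} {pA pB pC : M}
  {f : ι → M}

theorem sum_eq_of_three_classes (hAB : Disjoint A B) (hAC : Disjoint A C) (hBC : Disjoint B C)
    (hf : ∀ i, f i = if i ∈ A then pA else if i ∈ B then pB else pC)
    {T : Finset ι} (hT : T ⊆ A ∪ B ∪ C) :
    ∑ i ∈ T, f i = #(T ∩ A) • pA + #(T ∩ B) • pB + #(T ∩ C) • pC := by
  have hsplit : T = T ∩ A ∪ T ∩ B ∪ T ∩ C := by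
    rw [← inter_union_distrib_left, ← inter_union_distrib_left, inter_eq_left.mpr hT]
  have hfA : ∀ i ∈ T ∩ A, f i = pA := fun i hi => by simp [hf, (mem_inter.1 hi).2]
  have hfB : ∀ i ∈ T ∩ B, f i = pB := fun i hi => by
    have hiB := (mem_inter.1 hi).2
    simp [hf, hiB, disjoint_right.1 hAB hiB]
  have hfC : ∀ i ∈ T ∩ C, f i = pC := fun i hi => by
    have hiC := (mem_inter.1 hi).2
    simp [hf, disjoint_right.1 hAC hiC, disjoint_right.1 hBC hiC]
  have hdisjAB : Disjoint (T ∩ A) (T ∩ B) := hAB.mono inter_subset_right inter_subset_right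
  have hdisjC : Disjoint (T ∩ A ∪ T ∩ B) (T ∩ C) := disjoint_union_left.2
    ⟨hAC.mono inter_subset_right inter_subset_right, hBC.mono inter_subset_right inter_subset_right⟩
  conv_lhs => rw [hsplit]
  rw [sum_union hdisjC, sum_union hdisjAB, sum_eq_card_nsmul hfA, sum_eq_card_nsmul hfB,
    sum_eq_card_nsmul hfC]

end ThreeClasses

/-- Strict ABC scoring induces a lexicographic order: the total score of `S`
exceeds that of `S'` iff the triple of class counts of `S` is lexicographically
greater than that of `S'`. -/
theorem strict_abc_lex_order {ι : Type*} [DecidableEq ι]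
    (NC NAC NBC NCC : Finset ι)
    (hpart : NAC ∪ NBC ∪ NCC = NC)
    (hAB : Disjoint NAC NBC) (hAC : Disjoint NAC NCC) (hBC : Disjoint NBC NCC)
    (pC pB pA : ℕ)
    (hpC : pC = 1)
    (hpB : pB = NCC.card + 1)
    (hpA : pA = NCC.card + pB * NBC.card + 1)
    (score : ι → ℕ)
    (hscore : ∀ i, score i = if i ∈ NAC then pA else if i ∈ NBC then pB else pC)
    (S S' : Finset ι) (hS : S ⊆ NC) (hS' : S' ⊆ NC) :
    (∑ i ∈ S', score i < ∑ i ∈ S, score i) ↔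
      ((S' ∩ NAC).card < (S ∩ NAC).card ∨
        ((S ∩ NAC).card = (S' ∩ NAC).card ∧
          ((S' ∩ NBC).card < (S ∩ NBC).card ∨
            ((S ∩ NBC).card = (S' ∩ NBC).card ∧
              (S' ∩ NCC).card < (S ∩ NCC).card)))) := by
  have hsum : ∀ T ⊆ NC, ∑ i ∈ T, score i = #(T ∩ NAC) * pA + (#(T ∩ NBC) * pB + #(T ∩ NCC)) := by
    intro T hT
    rw [sum_eq_of_three_classes hAB hAC hBC hscore (hpart ▸ hT), hpC]
    simp only [smul_eq_mul, mul_one, add_assoc]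
  have hC_lt_pB : ∀ T : Finset ι, #(T ∩ NCC) < pB := fun T => by
    have := card_le_card (inter_subset_right : T ∩ NCC ⊆ NCC)
    omega
  have hBC_lt_pA : ∀ T : Finset ι, #(T ∩ NBC) * pB + #(T ∩ NCC) < pA := fun T => by
    have := Nat.mul_le_mul_right pB (card_le_card (inter_subset_right : T ∩ NBC ⊆ NBC))
    have := hC_lt_pB T
    rw [hpA, mul_comm pB]
    omega
  rw [hsum S hS, hsum S' hS', mul_add_lt_mul_add_iff_lex (hBC_lt_pA S) (hBC_lt_pA S'),
    mul_add_lt_mul_add_iff_lex (hC_lt_pB S) (hC_lt_pB S')]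
end
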